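/- Let T₁,…,T_N : C → C be nonexpansive on a nonempty closed convex subset C of a Banach space, and suppose λ_{n,i} → λ_i as n → ∞ for each i. Let K_n and K be the K-mappings generated by T₁,…,T_N with parameters λ_{n,1},…,λ_{n,N} and λ₁,…,λ_N respectively. Then for every bounded sequence {x_n} ⊆ C, ‖K_n x_n − K x_n‖ → 0. -/
import Mathlib


open Filter

/-- `Kaux T lam m` is `U_{m}` in the `K`-mapping construction of
Kangtunyakarn and Suantai: `U₀ = id`, `U_k = λ_k T_k U_{k-1} + (1-λ_k) U_{k-1}`.
The `K`-mapping generated by `T₁,…,T_N` and `λ₁,…,λ_N` is `Kaux T lam N`. -/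
def Kaux {X : Type*} [NormedAddCommGroup X] [NormedSpace ℝ X]
    (T : ℕ → X → X) (lam : ℕ → ℝ) : ℕ → X → X
  | 0 => id
  | (m + 1) => fun x =>
      lam (m + 1) • T (m + 1) (Kaux T lam m x) + (1 - lam (m + 1)) • Kaux T lam m x

theorem stmt_14 {X : Type*} [NormedAddCommGroup X] [NormedSpace ℝ X]
    [CompleteSpace X]
    (C : Set X) (hCne : C.Nonempty) (hCcl : IsClosed C) (hCcv : Convex ℝ C)
    (N : ℕ) (hN : 1 ≤ N)
    (T : ℕ → X → X) (hTmaps : ∀ i, 1 ≤ i → i ≤ N → Set.MapsTo (T i) C C)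
    (hTne : ∀ i, 1 ≤ i → i ≤ N → ∀ x ∈ C, ∀ y ∈ C, ‖T i x - T i y‖ ≤ ‖x - y‖)
    (lamn : ℕ → ℕ → ℝ) (lam : ℕ → ℝ)
    (hlamn : ∀ n i, lamn n i ∈ Set.Icc (0 : ℝ) 1)
    (hconv : ∀ i, 1 ≤ i → i ≤ N → Tendsto (fun n => lamn n i) atTop (nhds (lam i)))
    (x : ℕ → X) (hxC : ∀ n, x n ∈ C) (hxbdd : Bornology.IsBounded (Set.range x)) :
    Tendsto (fun n => ‖Kaux T (lamn n) N (x n) - Kaux T lam N (x n)‖)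
      atTop (nhds 0) := by
  suffices h : ∀ m, m ≤ N →
      (∀ n, Kaux T (lamn n) m (x n) ∈ C) ∧
      (∀ n, Kaux T lam m (x n) ∈ C) ∧
      (∃ M, ∀ n, ‖Kaux T lam m (x n)‖ ≤ M) ∧
      Tendsto (fun n => ‖Kaux T (lamn n) m (x n) - Kaux T lam m (x n)‖) atTop (nhds 0) by
    exact (h N le_rfl).2.2.2
  intro m
  induction m with
  | zero =>
    intro _
    obtain ⟨M, hM⟩ := isBounded_iff_forall_norm_le.mp hxbdd
    exact ⟨fun n => hxC n, fun n => hxC n, ⟨M, fun n => hM _ (Set.mem_range_self n)⟩,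
      by simpa [Kaux] using (tendsto_const_nhds : Tendsto (fun _ : ℕ => (0:ℝ)) atTop _)⟩
  | succ m ih =>
    intro hmN
    obtain ⟨hA, hB, ⟨M, hM⟩, hD⟩ := ih (Nat.le_of_succ_le hmN)
    have h1 : 1 ≤ m + 1 := Nat.succ_le_succ (Nat.zero_le m)
    have hlam0 : 0 ≤ lam (m + 1) :=
      ge_of_tendsto (hconv (m+1) h1 hmN) (Filter.Eventually.of_forall fun n => (hlamn n (m+1)).1)
    have hlam1 : lam (m + 1) ≤ 1 :=
      le_of_tendsto (hconv (m+1) h1 hmN) (Filter.Eventually.of_forall fun n => (hlamn n (m+1)).2)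
    set A : ℕ → X := fun n => Kaux T (lamn n) m (x n) with hAdef
    set B : ℕ → X := fun n => Kaux T lam m (x n) with hBdef
    have hM0 : 0 ≤ M := le_trans (norm_nonneg _) (hM 0)
    -- memberships
    have hA' : ∀ n, Kaux T (lamn n) (m+1) (x n) ∈ C := fun n =>
      hCcv (hTmaps _ h1 hmN (hA n)) (hA n) (hlamn n (m+1)).1
        (by linarith [(hlamn n (m+1)).2]) (by ring)
    have hB' : ∀ n, Kaux T lam (m+1) (x n) ∈ C := fun n =>
      hCcv (hTmaps _ h1 hmN (hB n)) (hB n) hlam0 (by linarith) (by ring)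
    -- bound on ‖T (m+1) (B n)‖
    have hTB : ∀ n, ‖T (m+1) (B n)‖ ≤ 2 * M + ‖T (m+1) (B 0)‖ := by
      intro n
      have h1' := hTne (m+1) h1 hmN (B n) (hB n) (B 0) (hB 0)
      have h2 : ‖B n - B 0‖ ≤ ‖B n‖ + ‖B 0‖ := norm_sub_le _ _
      have h3 : ‖T (m+1) (B n)‖ ≤ ‖T (m+1) (B n) - T (m+1) (B 0)‖ + ‖T (m+1) (B 0)‖ := by
        simpa using norm_add_le (T (m+1) (B n) - T (m+1) (B 0)) (T (m+1) (B 0))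
      have := hM n; have := hM 0
      linarith
    -- bound on new B
    have hMB' : ∀ n, ‖Kaux T lam (m+1) (x n)‖ ≤ 3 * M + ‖T (m+1) (B 0)‖ := by
      intro n
      have : Kaux T lam (m+1) (x n)
          = lam (m+1) • T (m+1) (B n) + (1 - lam (m+1)) • B n := rfl
      rw [this]
      have h1' := norm_add_le (lam (m+1) • T (m+1) (B n)) ((1 - lam (m+1)) • B n)
      rw [norm_smul, norm_smul, Real.norm_eq_abs, Real.norm_eq_abs,
        abs_of_nonneg hlam0, abs_of_nonneg (by linarith : (0:ℝ) ≤ 1 - lam (m+1))] at h1'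
      have h2 := hTB n
      have h3 := hM n
      have h4 : lam (m+1) * ‖T (m+1) (B n)‖ ≤ 1 * (2 * M + ‖T (m+1) (B 0)‖) :=
        mul_le_mul hlam1 h2 (norm_nonneg _) (by norm_num)
      have h5 : (1 - lam (m+1)) * ‖B n‖ ≤ 1 * M :=
        mul_le_mul (by linarith) h3 (norm_nonneg _) (by norm_num)
      linarith
    -- the key pointwise estimate
    have key : ∀ n, ‖Kaux T (lamn n) (m+1) (x n) - Kaux T lam (m+1) (x n)‖ ≤
        ‖A n - B n‖ + |lamn n (m+1) - lam (m+1)| * (3 * M + ‖T (m+1) (B 0)‖) := by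
      intro n
      have hid : Kaux T (lamn n) (m+1) (x n) - Kaux T lam (m+1) (x n)
          = lamn n (m+1) • (T (m+1) (A n) - T (m+1) (B n))
            + (1 - lamn n (m+1)) • (A n - B n)
            + (lamn n (m+1) - lam (m+1)) • (T (m+1) (B n) - B n) := by
        show (lamn n (m+1) • T (m+1) (A n) + (1 - lamn n (m+1)) • A n)
            - (lam (m+1) • T (m+1) (B n) + (1 - lam (m+1)) • B n) = _
        module
      rw [hid]
      have t1 := norm_add₃_le (a := lamn n (m+1) • (T (m+1) (A n) - T (m+1) (B n)))
        (b := (1 - lamn n (m+1)) • (A n - B n))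
        (c := (lamn n (m+1) - lam (m+1)) • (T (m+1) (B n) - B n))
      rw [norm_smul, norm_smul, norm_smul, Real.norm_eq_abs, Real.norm_eq_abs,
        Real.norm_eq_abs, abs_of_nonneg (hlamn n (m+1)).1,
        abs_of_nonneg (by linarith [(hlamn n (m+1)).2] : (0:ℝ) ≤ 1 - lamn n (m+1))] at t1
      have t2 : ‖T (m+1) (A n) - T (m+1) (B n)‖ ≤ ‖A n - B n‖ :=
        hTne (m+1) h1 hmN (A n) (hA n) (B n) (hB n)
      have t3 : lamn n (m+1) * ‖T (m+1) (A n) - T (m+1) (B n)‖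
          ≤ lamn n (m+1) * ‖A n - B n‖ :=
        mul_le_mul_of_nonneg_left t2 (hlamn n (m+1)).1
      have t4 : ‖T (m+1) (B n) - B n‖ ≤ 3 * M + ‖T (m+1) (B 0)‖ := by
        have := norm_sub_le (T (m+1) (B n)) (B n)
        have := hTB n; have := hM n; linarith
      have t5 : |lamn n (m+1) - lam (m+1)| * ‖T (m+1) (B n) - B n‖
          ≤ |lamn n (m+1) - lam (m+1)| * (3 * M + ‖T (m+1) (B 0)‖) :=
        mul_le_mul_of_nonneg_left t4 (abs_nonneg _)
      nlinarith [norm_nonneg (A n - B n)]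
    -- conclude tendsto
    have habs : Tendsto (fun n => |lamn n (m+1) - lam (m+1)|) atTop (nhds 0) := by
      have := ((hconv (m+1) h1 hmN).sub (tendsto_const_nhds (x := lam (m+1)))).abs
      simpa using this
    have hub : Tendsto (fun n => ‖A n - B n‖
        + |lamn n (m+1) - lam (m+1)| * (3 * M + ‖T (m+1) (B 0)‖)) atTop (nhds 0) := by
      have := hD.add (habs.mul (tendsto_const_nhds (x := 3 * M + ‖T (m+1) (B 0)‖)))
      simpa using this
    exact ⟨hA', hB', ⟨3 * M + ‖T (m+1) (B 0)‖, hMB'⟩,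
      squeeze_zero (fun n => norm_nonneg _) key hub⟩
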